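/- arXiv:2501.09483 — 3 statements merged into one kernel-verified Lean document; each statement's English description precedes it below -/
import Mathlib

section
/- Suppose P_n → P_0 in total variation. Define c_n^{-1} := ∫ p_n^{1/2} p_0^{1/2} dμ. Then c_n^{-1} = 1 − ½∫(p_n^{1/2} − p_0^{1/2})² dμ and c_n → 1 (in particular c_n^{-1} > 0 for all sufficiently large n), and the probability measures Q_n with μ-density q_n = c_n p_n^{1/2} p_0^{1/2} satisfy ∫ |q_n − p_0| dμ → 0; in particular Q_n → P_0 in total variation. -/
open MeasureTheory Filter Topology

/-- Behaviour of the normalizing constants `cₙ⁻¹ = ∫ √pₙ √p₀ dμ` and of the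
geometric-mean measures `Qₙ` with `μ`-density `qₙ = cₙ √pₙ √p₀` when `Pₙ → P₀` in total
variation. -/
theorem stmt_2
    {X : Type*} [MeasurableSpace X] (μ : Measure X) [SigmaFinite μ]
    (p : ℕ → X → ℝ) (p0 : X → ℝ)
    (hpm : ∀ n, Measurable (p n)) (hp0m : Measurable p0)
    (hpnn : ∀ n x, 0 ≤ p n x) (hp0nn : ∀ x, 0 ≤ p0 x)
    (P : ℕ → Measure X) (P0 : Measure X)
    (hP : ∀ n, P n = μ.withDensity fun x => ENNReal.ofReal (p n x))
    (hP0 : P0 = μ.withDensity fun x => ENNReal.ofReal (p0 x))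
    (hPprob : ∀ n, IsProbabilityMeasure (P n)) (hP0prob : IsProbabilityMeasure P0)
    -- P_n → P_0 in total variation: sup_A |P_n(A) - P_0(A)| → 0
    (hTV : ∀ ε > (0 : ℝ), ∀ᶠ n in atTop, ∀ A : Set X, MeasurableSet A →
      |(P n A).toReal - (P0 A).toReal| < ε)
    -- the inverse normalizing constant cₙ⁻¹ and the density qₙ of Qₙ
    (cInv : ℕ → ℝ) (hcInv : ∀ n, cInv n = ∫ x, Real.sqrt (p n x) * Real.sqrt (p0 x) ∂μ)
    (q : ℕ → X → ℝ)
    (hq : ∀ n x, q n x = (cInv n)⁻¹ * (Real.sqrt (p n x) * Real.sqrt (p0 x)))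
    (Q : ℕ → Measure X)
    (hQ : ∀ n, Q n = μ.withDensity fun x => ENNReal.ofReal (q n x)) :
    -- cₙ⁻¹ = 1 − ½ ∫ (√pₙ − √p₀)² dμ
    (∀ n, cInv n = 1 - (1 / 2) * ∫ x, (Real.sqrt (p n x) - Real.sqrt (p0 x)) ^ 2 ∂μ) ∧
    -- cₙ → 1
    Tendsto (fun n => (cInv n)⁻¹) atTop (𝓝 1) ∧
    -- cₙ⁻¹ > 0 for all sufficiently large n, so Qₙ is a probability measure
    (∀ᶠ n in atTop, 0 < cInv n) ∧
    (∀ᶠ n in atTop, IsProbabilityMeasure (Q n)) ∧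
    -- ∫ |qₙ − p₀| dμ → 0
    Tendsto (fun n => ∫ x, |q n x - p0 x| ∂μ) atTop (𝓝 0) ∧
    -- in particular Qₙ → P₀ in total variation
    (∀ ε > (0 : ℝ), ∀ᶠ n in atTop, ∀ A : Set X, MeasurableSet A →
      |(Q n A).toReal - (P0 A).toReal| < ε) := by
  classical
  -- pointwise elementary facts
  have key_amgm : ∀ a b : ℝ, 0 ≤ a → 0 ≤ b →
      Real.sqrt a * Real.sqrt b ≤ a + b := by
    intro a b ha hb
    nlinarith [sq_nonneg (Real.sqrt a - Real.sqrt b), Real.sq_sqrt ha, Real.sq_sqrt hb,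
      Real.sqrt_nonneg a, Real.sqrt_nonneg b]
  have key_sq : ∀ a b : ℝ, 0 ≤ a → 0 ≤ b →
      (Real.sqrt a - Real.sqrt b) ^ 2 ≤ |a - b| := by
    intro a b ha hb
    rcases le_total b a with hba | hba
    · have h1 : Real.sqrt b ≤ Real.sqrt a := Real.sqrt_le_sqrt hba
      rw [abs_of_nonneg (by linarith)]
      nlinarith [Real.sq_sqrt ha, Real.sq_sqrt hb, Real.sqrt_nonneg a, Real.sqrt_nonneg b]
    · have h1 : Real.sqrt a ≤ Real.sqrt b := Real.sqrt_le_sqrt hba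
      rw [abs_of_nonpos (by linarith)]
      nlinarith [Real.sq_sqrt ha, Real.sq_sqrt hb, Real.sqrt_nonneg a, Real.sqrt_nonneg b]
  have key2 : ∀ t u v : ℝ, 0 < t → 0 ≤ u → 0 ≤ v →
      u * v ≤ (t * u ^ 2 + t⁻¹ * v ^ 2) / 2 := by
    intro t u v ht hu hv
    have h1 : 2 * t * (u * v) ≤ t ^ 2 * u ^ 2 + v ^ 2 := by nlinarith [sq_nonneg (t * u - v)]
    have h2 : u * v ≤ (t ^ 2 * u ^ 2 + v ^ 2) / (2 * t) := by
      rw [le_div_iff₀ (by positivity)]; linarith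
    calc u * v ≤ (t ^ 2 * u ^ 2 + v ^ 2) / (2 * t) := h2
      _ = (t * u ^ 2 + t⁻¹ * v ^ 2) / 2 := by field_simp
  -- integrability of the densities
  have hint : ∀ n, Integrable (p n) μ := by
    intro n
    refine ⟨(hpm n).aestronglyMeasurable, ?_⟩
    rw [hasFiniteIntegral_iff_ofReal (Filter.Eventually.of_forall (hpnn n))]
    have h : ∫⁻ x, ENNReal.ofReal (p n x) ∂μ = P n Set.univ := by
      rw [hP n, withDensity_apply _ MeasurableSet.univ, Measure.restrict_univ]
    rw [h, (hPprob n).measure_univ]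
    exact ENNReal.one_lt_top
  have hint0 : Integrable p0 μ := by
    refine ⟨hp0m.aestronglyMeasurable, ?_⟩
    rw [hasFiniteIntegral_iff_ofReal (Filter.Eventually.of_forall hp0nn)]
    have h : ∫⁻ x, ENNReal.ofReal (p0 x) ∂μ = P0 Set.univ := by
      rw [hP0, withDensity_apply _ MeasurableSet.univ, Measure.restrict_univ]
    rw [h, hP0prob.measure_univ]
    exact ENNReal.one_lt_top
  have hIpn : ∀ n, ∫ x, p n x ∂μ = 1 := by
    intro n
    rw [integral_eq_lintegral_of_nonneg_ae (Filter.Eventually.of_forall (hpnn n))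
      (hpm n).aestronglyMeasurable]
    have h : ∫⁻ x, ENNReal.ofReal (p n x) ∂μ = P n Set.univ := by
      rw [hP n, withDensity_apply _ MeasurableSet.univ, Measure.restrict_univ]
    rw [h, (hPprob n).measure_univ, ENNReal.toReal_one]
  have hIp0 : ∫ x, p0 x ∂μ = 1 := by
    rw [integral_eq_lintegral_of_nonneg_ae (Filter.Eventually.of_forall hp0nn)
      hp0m.aestronglyMeasurable]
    have h : ∫⁻ x, ENNReal.ofReal (p0 x) ∂μ = P0 Set.univ := by
      rw [hP0, withDensity_apply _ MeasurableSet.univ, Measure.restrict_univ]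
    rw [h, hP0prob.measure_univ, ENNReal.toReal_one]
  -- evaluating withDensity measures as real set integrals
  have happly : ∀ f : X → ℝ, (∀ x, 0 ≤ f x) → AEStronglyMeasurable f μ →
      ∀ A : Set X, MeasurableSet A →
      ((μ.withDensity fun x => ENNReal.ofReal (f x)) A).toReal = ∫ x in A, f x ∂μ := by
    intro f hf hfm A hA
    rw [withDensity_apply _ hA,
      integral_eq_lintegral_of_nonneg_ae (Filter.Eventually.of_forall hf) hfm.restrict]
  -- L¹ convergence of the densities (Scheffé-type argument from TV)
  have habs_int : ∀ n, Integrable (fun x => |p n x - p0 x|) μ :=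
    fun n => ((hint n).sub hint0).abs
  have hL1 : Tendsto (fun n => ∫ x, |p n x - p0 x| ∂μ) atTop (𝓝 0) := by
    rw [NormedAddCommGroup.tendsto_nhds_zero]
    intro ε hε
    filter_upwards [hTV (ε / 2) (by positivity)] with n hn
    set A : Set X := {x | p0 x < p n x} with hAdef
    have hA : MeasurableSet A := measurableSet_lt hp0m (hpm n)
    have h1 : ∫ x, |p n x - p0 x| ∂μ =
        (∫ x in A, (p n x - p0 x) ∂μ) + ∫ x in Aᶜ, (p0 x - p n x) ∂μ := by
      rw [← integral_add_compl hA (habs_int n)]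
      congr 1
      · refine setIntegral_congr_fun hA fun x hx => ?_
        exact abs_of_pos (sub_pos.2 hx)
      · refine setIntegral_congr_fun hA.compl fun x hx => ?_
        have hx' : p n x ≤ p0 x := not_lt.1 hx
        rw [abs_of_nonpos (by linarith), neg_sub]
    have h2 : ∫ x in A, (p n x - p0 x) ∂μ = (P n A).toReal - (P0 A).toReal := by
      rw [integral_sub ((hint n).restrict) hint0.restrict, hP n, hP0,
        happly _ (hpnn n) (hpm n).aestronglyMeasurable A hA,
        happly _ hp0nn hp0m.aestronglyMeasurable A hA]
    have h3 : ∫ x in Aᶜ, (p0 x - p n x) ∂μ = (P0 Aᶜ).toReal - (P n Aᶜ).toReal := by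
      rw [integral_sub hint0.restrict ((hint n).restrict), hP n, hP0,
        happly _ (hpnn n) (hpm n).aestronglyMeasurable Aᶜ hA.compl,
        happly _ hp0nn hp0m.aestronglyMeasurable Aᶜ hA.compl]
    have hnn : 0 ≤ ∫ x, |p n x - p0 x| ∂μ := integral_nonneg fun x => abs_nonneg _
    have hb1 := abs_lt.1 (hn A hA)
    have hb2 := abs_lt.1 (hn Aᶜ hA.compl)
    rw [Real.norm_eq_abs, abs_of_nonneg hnn, h1, h2, h3]
    linarith [hb1.1, hb1.2, hb2.1, hb2.2]
  -- integrability of the Hellinger integrands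
  have hsm : ∀ n, Measurable fun x => Real.sqrt (p n x) * Real.sqrt (p0 x) :=
    fun n => (hpm n).sqrt.mul hp0m.sqrt
  have hprod_int : ∀ n, Integrable (fun x => Real.sqrt (p n x) * Real.sqrt (p0 x)) μ := by
    intro n
    refine Integrable.mono' ((hint n).add hint0) (hsm n).aestronglyMeasurable
      (Filter.Eventually.of_forall fun x => ?_)
    rw [Real.norm_eq_abs,
      abs_of_nonneg (mul_nonneg (Real.sqrt_nonneg _) (Real.sqrt_nonneg _))]
    exact key_amgm _ _ (hpnn n x) (hp0nn x)
  have hsq_int : ∀ n, Integrable (fun x => (Real.sqrt (p n x) - Real.sqrt (p0 x)) ^ 2) μ := by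
    intro n
    have hInt2 : Integrable (fun x => 2 * (p n x + p0 x)) μ :=
      ((hint n).add hint0).const_mul 2
    refine Integrable.mono' hInt2
      (((hpm n).sqrt.sub hp0m.sqrt).pow_const 2).aestronglyMeasurable
      (Filter.Eventually.of_forall fun x => ?_)
    rw [Real.norm_eq_abs, abs_of_nonneg (sq_nonneg _)]
    nlinarith [Real.sq_sqrt (hpnn n x), Real.sq_sqrt (hp0nn x),
      mul_nonneg (Real.sqrt_nonneg (p n x)) (Real.sqrt_nonneg (p0 x))]
  -- Part 1 : the identity for cInv
  have part1 : ∀ n, cInv n =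
      1 - (1 / 2) * ∫ x, (Real.sqrt (p n x) - Real.sqrt (p0 x)) ^ 2 ∂μ := by
    intro n
    have hexp : ∫ x, (Real.sqrt (p n x) - Real.sqrt (p0 x)) ^ 2 ∂μ =
        ∫ x, (p n x + p0 x - 2 * (Real.sqrt (p n x) * Real.sqrt (p0 x))) ∂μ := by
      refine integral_congr_ae (Filter.Eventually.of_forall fun x => ?_)
      dsimp only
      rw [sub_sq, Real.sq_sqrt (hpnn n x), Real.sq_sqrt (hp0nn x)]
      ring
    have hadd : Integrable (fun x => p n x + p0 x) μ := (hint n).add hint0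
    have hmul2 : Integrable (fun x => 2 * (Real.sqrt (p n x) * Real.sqrt (p0 x))) μ :=
      (hprod_int n).const_mul 2
    rw [hcInv n, hexp, integral_sub hadd hmul2, integral_add (hint n) hint0,
      integral_const_mul, hIpn n, hIp0]
    ring
  -- Hellinger distance tends to 0
  have hH : Tendsto (fun n => ∫ x, (Real.sqrt (p n x) - Real.sqrt (p0 x)) ^ 2 ∂μ)
      atTop (𝓝 0) := by
    refine squeeze_zero (fun n => integral_nonneg fun x => sq_nonneg _) (fun n => ?_) hL1
    exact integral_mono (hsq_int n) (habs_int n) fun x => key_sq _ _ (hpnn n x) (hp0nn x)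
  have hcTend : Tendsto cInv atTop (𝓝 1) := by
    have h : Tendsto (fun n =>
        1 - (1 / 2) * ∫ x, (Real.sqrt (p n x) - Real.sqrt (p0 x)) ^ 2 ∂μ)
        atTop (𝓝 (1 - (1 / 2) * 0)) := tendsto_const_nhds.sub (hH.const_mul _)
    simpa using h.congr fun n => (part1 n).symm
  have hcInvTend : Tendsto (fun n => (cInv n)⁻¹) atTop (𝓝 1) := by
    simpa using hcTend.inv₀ one_ne_zero
  have hcpos : ∀ᶠ n in atTop, 0 < cInv n := hcTend.eventually (eventually_gt_nhds one_pos)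
  -- integrability and nonnegativity of q
  have hq_int : ∀ n, Integrable (q n) μ := by
    intro n
    have h : q n = fun x => (cInv n)⁻¹ * (Real.sqrt (p n x) * Real.sqrt (p0 x)) :=
      funext (hq n)
    rw [h]
    exact (hprod_int n).const_mul _
  have hqm : ∀ n, Measurable (q n) := by
    intro n
    have h : q n = fun x => (cInv n)⁻¹ * (Real.sqrt (p n x) * Real.sqrt (p0 x)) :=
      funext (hq n)
    rw [h]
    exact measurable_const.mul (hsm n)
  have hqnn : ∀ n, 0 < cInv n → ∀ x, 0 ≤ q n x := by
    intro n hc x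
    rw [hq n x]
    exact mul_nonneg (inv_nonneg.2 hc.le)
      (mul_nonneg (Real.sqrt_nonneg _) (Real.sqrt_nonneg _))
  have hIq : ∀ n, 0 < cInv n → ∫ x, q n x ∂μ = 1 := by
    intro n hc
    have h : ∫ x, q n x ∂μ =
        (cInv n)⁻¹ * ∫ x, Real.sqrt (p n x) * Real.sqrt (p0 x) ∂μ := by
      rw [funext (hq n), integral_const_mul]
    rw [h, ← hcInv n, inv_mul_cancel₀ (ne_of_gt hc)]
  have hqprob : ∀ᶠ n in atTop, IsProbabilityMeasure (Q n) := by
    filter_upwards [hcpos] with n hc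
    constructor
    rw [hQ n, withDensity_apply _ MeasurableSet.univ, Measure.restrict_univ,
      ← ofReal_integral_eq_lintegral_ofReal (hq_int n)
        (Filter.Eventually.of_forall (hqnn n hc)), hIq n hc, ENNReal.ofReal_one]
  -- the L¹ convergence of q n to p0
  have hg_int : ∀ n, Integrable
      (fun x => Real.sqrt (p0 x) * |Real.sqrt (p n x) - Real.sqrt (p0 x)|) μ := by
    intro n
    have hInt3 : Integrable
        (fun x => p0 x + (Real.sqrt (p n x) - Real.sqrt (p0 x)) ^ 2) μ :=
      hint0.add (hsq_int n)
    refine Integrable.mono' hInt3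
      (hp0m.sqrt.mul ((hpm n).sqrt.sub hp0m.sqrt).abs).aestronglyMeasurable
      (Filter.Eventually.of_forall fun x => ?_)
    rw [Real.norm_eq_abs, abs_of_nonneg (mul_nonneg (Real.sqrt_nonneg _) (abs_nonneg _))]
    have h := key2 1 (Real.sqrt (p0 x)) |Real.sqrt (p n x) - Real.sqrt (p0 x)|
      one_pos (Real.sqrt_nonneg _) (abs_nonneg _)
    have h2 : (Real.sqrt (p0 x)) ^ 2 = p0 x := Real.sq_sqrt (hp0nn x)
    have h3 : |Real.sqrt (p n x) - Real.sqrt (p0 x)| ^ 2 =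
        (Real.sqrt (p n x) - Real.sqrt (p0 x)) ^ 2 := sq_abs _
    rw [h2, h3] at h
    simp only [one_mul, inv_one] at h
    nlinarith [sq_nonneg (Real.sqrt (p n x) - Real.sqrt (p0 x)), hp0nn x]
  have hQL1 : Tendsto (fun n => ∫ x, |q n x - p0 x| ∂μ) atTop (𝓝 0) := by
    rw [NormedAddCommGroup.tendsto_nhds_zero]
    intro ε hε
    set δ : ℝ := ε / 8 with hδdef
    have hδ : 0 < δ := by positivity
    have e1 : ∀ᶠ n in atTop,
        (∫ x, (Real.sqrt (p n x) - Real.sqrt (p0 x)) ^ 2 ∂μ) < δ ^ 2 :=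
      hH.eventually (eventually_lt_nhds (by positivity))
    have e2 : ∀ᶠ n in atTop, |(cInv n)⁻¹ - 1| < min (ε / 4) 1 := by
      have h0 : Tendsto (fun n => (cInv n)⁻¹ - 1) atTop (𝓝 0) := by
        simpa using hcInvTend.sub (tendsto_const_nhds (x := (1 : ℝ)))
      have := NormedAddCommGroup.tendsto_nhds_zero.1 h0 (min (ε / 4) 1)
        (lt_min (by positivity) one_pos)
      simpa [Real.norm_eq_abs] using this
    filter_upwards [e1, e2, hcpos] with n h1 h2 hc
    have hcinv_lt : (cInv n)⁻¹ < 2 := by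
      have := (abs_lt.1 h2).2
      have hm : min (ε / 4) 1 ≤ 1 := min_le_right _ _
      linarith
    have hcinv_nn : 0 ≤ (cInv n)⁻¹ := inv_nonneg.2 hc.le
    -- pointwise bound
    have hpt : ∀ x, |q n x - p0 x| ≤
        (cInv n)⁻¹ * (Real.sqrt (p0 x) * |Real.sqrt (p n x) - Real.sqrt (p0 x)|) +
          |(cInv n)⁻¹ - 1| * p0 x := by
      intro x
      have hid : q n x - p0 x =
          (cInv n)⁻¹ * (Real.sqrt (p0 x) * (Real.sqrt (p n x) - Real.sqrt (p0 x))) +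
            ((cInv n)⁻¹ - 1) * p0 x := by
        rw [hq n x]
        have : Real.sqrt (p0 x) * Real.sqrt (p0 x) = p0 x := Real.mul_self_sqrt (hp0nn x)
        nlinarith [this]
      calc |q n x - p0 x| ≤
          |(cInv n)⁻¹ * (Real.sqrt (p0 x) * (Real.sqrt (p n x) - Real.sqrt (p0 x)))| +
            |((cInv n)⁻¹ - 1) * p0 x| := by rw [hid]; exact abs_add_le _ _
        _ = (cInv n)⁻¹ * (Real.sqrt (p0 x) * |Real.sqrt (p n x) - Real.sqrt (p0 x)|) +
            |(cInv n)⁻¹ - 1| * p0 x := by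
            rw [abs_mul, abs_mul, abs_mul, abs_of_nonneg hcinv_nn,
              abs_of_nonneg (Real.sqrt_nonneg _), abs_of_nonneg (hp0nn x)]
    -- integral bounds
    have hint_rhs : Integrable (fun x =>
        (cInv n)⁻¹ * (Real.sqrt (p0 x) * |Real.sqrt (p n x) - Real.sqrt (p0 x)|) +
          |(cInv n)⁻¹ - 1| * p0 x) μ :=
      ((hg_int n).const_mul _).add (hint0.const_mul _)
    have hstep1 : ∫ x, |q n x - p0 x| ∂μ ≤
        (cInv n)⁻¹ * (∫ x, Real.sqrt (p0 x) * |Real.sqrt (p n x) - Real.sqrt (p0 x)| ∂μ) +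
          |(cInv n)⁻¹ - 1| := by
      have := integral_mono ((hq_int n).sub hint0).abs hint_rhs hpt
      rwa [integral_add ((hg_int n).const_mul _) (hint0.const_mul _),
        integral_const_mul, integral_const_mul, hIp0, mul_one] at this
    -- bound the first integral via AM-GM with parameter δ
    have hg_bd : ∫ x, Real.sqrt (p0 x) * |Real.sqrt (p n x) - Real.sqrt (p0 x)| ∂μ ≤
        (δ * 1 + δ⁻¹ * ∫ x, (Real.sqrt (p n x) - Real.sqrt (p0 x)) ^ 2 ∂μ) / 2 := by
      have hptw : ∀ x, Real.sqrt (p0 x) * |Real.sqrt (p n x) - Real.sqrt (p0 x)| ≤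
          (δ * p0 x + δ⁻¹ * (Real.sqrt (p n x) - Real.sqrt (p0 x)) ^ 2) / 2 := by
        intro x
        have h := key2 δ (Real.sqrt (p0 x)) |Real.sqrt (p n x) - Real.sqrt (p0 x)|
          hδ (Real.sqrt_nonneg _) (abs_nonneg _)
        rwa [Real.sq_sqrt (hp0nn x), sq_abs] at h
      have hint_rhs2 : Integrable (fun x =>
          (δ * p0 x + δ⁻¹ * (Real.sqrt (p n x) - Real.sqrt (p0 x)) ^ 2) / 2) μ :=
        (((hint0.const_mul _).add ((hsq_int n).const_mul _)).div_const 2)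
      have := integral_mono (hg_int n) hint_rhs2 hptw
      rwa [integral_div, integral_add (hint0.const_mul _) ((hsq_int n).const_mul _),
        integral_const_mul, integral_const_mul, hIp0] at this
    have hg_lt : ∫ x, Real.sqrt (p0 x) * |Real.sqrt (p n x) - Real.sqrt (p0 x)| ∂μ < δ := by
      have hδinv : (0:ℝ) < δ⁻¹ := by positivity
      have h4 : δ⁻¹ * ∫ x, (Real.sqrt (p n x) - Real.sqrt (p0 x)) ^ 2 ∂μ < δ⁻¹ * δ ^ 2 :=
        (mul_lt_mul_iff_right₀ hδinv).2 h1
      have h5 : δ⁻¹ * δ ^ 2 = δ := by field_simp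
      calc ∫ x, Real.sqrt (p0 x) * |Real.sqrt (p n x) - Real.sqrt (p0 x)| ∂μ ≤
          (δ * 1 + δ⁻¹ * ∫ x, (Real.sqrt (p n x) - Real.sqrt (p0 x)) ^ 2 ∂μ) / 2 := hg_bd
        _ < (δ * 1 + δ) / 2 := by rw [h5] at h4; linarith
        _ = δ := by ring
    have hg_nn : 0 ≤ ∫ x, Real.sqrt (p0 x) * |Real.sqrt (p n x) - Real.sqrt (p0 x)| ∂μ :=
      integral_nonneg fun x => mul_nonneg (Real.sqrt_nonneg _) (abs_nonneg _)
    have habs_nn : 0 ≤ ∫ x, |q n x - p0 x| ∂μ := integral_nonneg fun x => abs_nonneg _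
    rw [Real.norm_eq_abs, abs_of_nonneg habs_nn]
    have hmin : |(cInv n)⁻¹ - 1| < ε / 4 := lt_of_lt_of_le h2 (min_le_left _ _)
    have hc2 : (cInv n)⁻¹ *
        (∫ x, Real.sqrt (p0 x) * |Real.sqrt (p n x) - Real.sqrt (p0 x)| ∂μ) ≤
        2 * (∫ x, Real.sqrt (p0 x) * |Real.sqrt (p n x) - Real.sqrt (p0 x)| ∂μ) :=
      mul_le_mul_of_nonneg_right hcinv_lt.le hg_nn
    have : (2:ℝ) * δ = ε / 4 := by rw [hδdef]; ring
    nlinarith [hg_lt, hg_nn]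
  -- assemble everything
  refine ⟨part1, hcInvTend, hcpos, hqprob, hQL1, ?_⟩
  intro ε hε
  filter_upwards [hQL1.eventually (eventually_lt_nhds hε), hcpos] with n h1 hc
  intro A hA
  have hq1 : (Q n A).toReal = ∫ x in A, q n x ∂μ := by
    rw [hQ n]
    exact happly _ (hqnn n hc) (hqm n).aestronglyMeasurable A hA
  have hp1 : (P0 A).toReal = ∫ x in A, p0 x ∂μ := by
    rw [hP0]
    exact happly _ hp0nn hp0m.aestronglyMeasurable A hA
  rw [hq1, hp1, ← integral_sub ((hq_int n).restrict) hint0.restrict]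
  calc |∫ x in A, (q n x - p0 x) ∂μ| ≤ ∫ x in A, |q n x - p0 x| ∂μ := by
        simpa [Real.norm_eq_abs] using
          norm_integral_le_integral_norm (μ := μ.restrict A) (f := fun x => q n x - p0 x)
    _ ≤ ∫ x, |q n x - p0 x| ∂μ := setIntegral_le_integral ((hq_int n).sub hint0).abs
        (Filter.Eventually.of_forall fun x => abs_nonneg _)
    _ < ε := h1
end

section
/- Fix h ∈ ℝ^p and θ_0 ∈ ℝ^p, and set θ̃_n = θ_0 + h/√n. For each n, on a probability space (Ω_n, Pr_n), let F_n^L, F_n^U : ℝ^p × Ω_n → ℝ be random functions that are twice continuously differentiable in the first argument, and let A_n be real random variables satisfying the sandwich inequalities n(F_n^L(θ̃_n) − F_n^L(θ_0)) ≤ A_n ≤ n(F_n^U(θ̃_n) − F_n^U(θ_0)). Suppose there are random vectors Δ_n : Ω_n → ℝ^p and symmetric p×p matrices J_n such that, for j ∈ {L, U}: (i) √n ∇_θ F_n^j(θ_0) − Δ_n → 0 in Pr_n-probability, and (ii) for every random sequence s_n with s_n → θ_0 in Pr_n-probability, ∇²_θ F_n^j(s_n) + J_n → 0 in Pr_n-probability.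 Then A_n − (hᵀ Δ_n − ½ hᵀ J_n h) → 0 in Pr_n-probability. -/
/-!
Taylor-expand `F = Fᴸ, Fᵁ` to second order at `θ₀` with the Lagrange remainder taken at a point
`ξₙ` of the segment `[θ₀, θ̃ₙ]`:
`n (F θ̃ₙ - F θ₀) - (hᵀΔₙ - ½ hᵀJₙh) = hᵀ(√n ∇F θ₀ - Δₙ) + ½ hᵀ(∇²F ξₙ + Jₙ)h`.
Since `‖ξₙ - θ₀‖ ≤ ‖h‖/√n` surely, hypothesis (ii) applies to `ξₙ`, and together with (i) both
terms on the right vanish in probability. `Aₙ - (hᵀΔₙ - ½ hᵀJₙh)` lies between the two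
remainders, hence vanishes in probability too.
-/

open MeasureTheory Filter Topology RealInnerProductSpace

theorem exists_sub_sub_deriv_eq_half_deriv2 {g g' g'' : ℝ → ℝ}
    (hg : ∀ t, HasDerivAt g (g' t) t) (hg' : ∀ t, HasDerivAt g' (g'' t) t) :
    ∃ τ ∈ Set.Ioo (0 : ℝ) 1, g 1 - g 0 - g' 0 = g'' τ / 2 := by
  -- Cauchy's mean value theorem against `t ^ 2`, then Lagrange's for `g'` on `[0, c]`
  obtain ⟨c, hc, hcauchy⟩ := exists_ratio_hasDerivAt_eq_ratio_slope
    (fun t => g t - t * g' 0) (fun t => g' t - g' 0) zero_lt_one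
    (fun t _ => ((hg t).sub (hasDerivAt_mul_const (g' 0))).continuousAt.continuousWithinAt)
    (fun t _ => (hg t).sub (hasDerivAt_mul_const (g' 0)))
    (fun t => t ^ 2) (fun t => 2 * t) (continuous_pow 2).continuousOn
    (fun t _ => by simpa using hasDerivAt_pow 2 t)
  obtain ⟨τ, hτ, hmvt⟩ := exists_hasDerivAt_eq_slope g' g'' hc.1
    (fun t _ => (hg' t).continuousAt.continuousWithinAt) (fun t _ => hg' t)
  refine ⟨τ, ⟨hτ.1, hτ.2.trans hc.2⟩, ?_⟩
  rw [hmvt]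
  field_simp [hc.1.ne']
  linarith

section Taylor

variable {E : Type*} [NormedAddCommGroup E] [InnerProductSpace ℝ E]

theorem sq_mul_sub_sub_quadratic_eq {r : ℝ} (hr : r ≠ 0) {f₀ f₁ : ℝ} {g Δ h : E}
    {H J : E →L[ℝ] E}
    (hf : f₁ - f₀ = ⟪g, r⁻¹ • h⟫ + 1 / 2 * ⟪r⁻¹ • h, H (r⁻¹ • h)⟫) :
    r ^ 2 * (f₁ - f₀) - (⟪h, Δ⟫ - 1 / 2 * ⟪h, J h⟫) =
      ⟪h, r • g - Δ⟫ + 1 / 2 * ⟪h, (H + J) h⟫ := by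
  rw [hf]
  simp only [map_smul, real_inner_smul_left, real_inner_smul_right, inner_sub_right,
    add_apply, inner_add_right, real_inner_comm g h]
  field_simp
  ring

theorem norm_half_inner_apply_le (h : E) (M : E →L[ℝ] E) :
    ‖1 / 2 * ⟪h, M h⟫‖ ≤ ‖h‖ * ‖h‖ * ‖M‖ :=
  calc ‖1 / 2 * ⟪h, M h⟫‖ ≤ ‖⟪h, M h⟫‖ := by
        rw [norm_mul]
        exact mul_le_of_le_one_left (norm_nonneg _) (by norm_num)
    _ ≤ ‖h‖ * (‖M‖ * ‖h‖) := (norm_inner_le_norm _ _).trans (by gcongr; exact M.le_opNorm h)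
    _ = ‖h‖ * ‖h‖ * ‖M‖ := by ring

variable [CompleteSpace E]

theorem ContDiff.differentiable_gradient {F : E → ℝ} (hF : ContDiff ℝ 2 F) :
    Differentiable ℝ (gradient F) :=
  (InnerProductSpace.toDual ℝ E).symm.toLinearIsometry.toContinuousLinearMap.differentiable.comp
    ((hF.fderiv_right (by norm_num)).differentiable one_ne_zero)

theorem exists_sub_eq_inner_gradient_add_half_inner_hessian {F : E → ℝ} (hF : ContDiff ℝ 2 F)
    (a v : E) : ∃ t ∈ Set.Ioo (0 : ℝ) 1,
      F (a + v) - F a = ⟪gradient F a, v⟫ + 1 / 2 * ⟪v, fderiv ℝ (gradient F) (a + t • v) v⟫ := by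
  have hline (t : ℝ) : HasDerivAt (fun t : ℝ => a + t • v) v t := by
    simpa using ((hasDerivAt_id t).smul_const v).const_add a
  have hderiv (t : ℝ) : HasDerivAt (fun t : ℝ => F (a + t • v)) ⟪gradient F (a + t • v), v⟫ t := by
    simpa [Function.comp_def] using (hasGradientAt_iff_hasFDerivAt.1
      ((hF.differentiable two_ne_zero _).hasGradientAt)).comp_hasDerivAt t (hline t)
  have hderiv2 (t : ℝ) : HasDerivAt (fun t : ℝ => ⟪gradient F (a + t • v), v⟫)
      ⟪fderiv ℝ (gradient F) (a + t • v) v, v⟫ t := by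
    simpa using ((hF.differentiable_gradient _).hasFDerivAt.comp_hasDerivAt t (hline t)).inner ℝ
      (hasDerivAt_const t v)
  obtain ⟨τ, hτ, key⟩ := exists_sub_sub_deriv_eq_half_deriv2 hderiv hderiv2
  refine ⟨τ, hτ, ?_⟩
  simp only [one_smul, zero_smul, add_zero] at key
  rw [real_inner_comm (fderiv ℝ (gradient F) (a + τ • v) v) v]
  linarith

end Taylor

section ConvergenceInProbability

variable {Ω : ℕ → Type*} [∀ n, MeasurableSpace (Ω n)] {P : ∀ n, Measure (Ω n)}

variable (P) in
/-- `P n` is applied to arbitrary sets as an outer measure, so no measurability is required. -/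
def TendstoZeroInProbability {E : Type*} [Norm E] (X : ∀ n, Ω n → E) : Prop :=
  ∀ ε > (0 : ℝ), Tendsto (fun n => P n {ω | ε < ‖X n ω‖}) atTop (𝓝 0)

namespace TendstoZeroInProbability

variable {E F : Type*} [SeminormedAddCommGroup E] [SeminormedAddCommGroup F]

theorem of_norm_le_tendsto_zero {X : ∀ n, Ω n → E} {r : ℕ → ℝ} (hr : Tendsto r atTop (𝓝 0))
    (hX : ∀ n ω, ‖X n ω‖ ≤ r n) : TendstoZeroInProbability P X := by
  intro ε hε
  refine tendsto_const_nhds.congr' ?_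
  filter_upwards [hr.eventually_lt_const hε] with n hn
  have hempty : {ω | ε < ‖X n ω‖} = ∅ :=
    Set.eq_empty_of_forall_notMem fun ω hω => (hX n ω).not_gt (hn.trans hω)
  rw [hempty, measure_empty]

theorem of_norm_le_mul {X : ∀ n, Ω n → E} {Y : ∀ n, Ω n → F} (hX : TendstoZeroInProbability P X)
    (C : ℝ) (hYX : ∀ᶠ n in atTop, ∀ ω, ‖Y n ω‖ ≤ C * ‖X n ω‖) :
    TendstoZeroInProbability P Y := by
  intro ε hε
  have hC : 0 < |C| + 1 := by positivity
  refine tendsto_of_tendsto_of_tendsto_of_le_of_le' tendsto_const_nhds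
    (hX (ε / (|C| + 1)) (by positivity)) (.of_forall fun _ => zero_le) ?_
  filter_upwards [hYX] with n hn
  refine measure_mono fun ω (hω : ε < ‖Y n ω‖) => ?_
  show ε / (|C| + 1) < ‖X n ω‖
  rw [div_lt_iff₀ hC]
  nlinarith [hn ω, le_abs_self C, norm_nonneg (X n ω)]

theorem add {X Y : ∀ n, Ω n → E} (hX : TendstoZeroInProbability P X)
    (hY : TendstoZeroInProbability P Y) :
    TendstoZeroInProbability P fun n ω => X n ω + Y n ω := by
  intro ε hε
  refine tendsto_of_tendsto_of_tendsto_of_le_of_le tendsto_const_nhds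
    (by simpa using (hX (ε / 2) (half_pos hε)).add (hY (ε / 2) (half_pos hε)))
    (fun _ => zero_le) fun n => ?_
  refine (measure_mono fun ω (hω : ε < ‖X n ω + Y n ω‖) => ?_).trans (measure_union_le _ _)
  by_cases hXω : ε / 2 < ‖X n ω‖
  · exact Or.inl hXω
  · exact Or.inr (show ε / 2 < ‖Y n ω‖ by linarith [norm_add_le (X n ω) (Y n ω), not_lt.1 hXω])

theorem of_le_of_le {L X U : ∀ n, Ω n → ℝ} (hL : TendstoZeroInProbability P L)
    (hU : TendstoZeroInProbability P U) (hLX : ∀ n ω, L n ω ≤ X n ω)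
    (hXU : ∀ n ω, X n ω ≤ U n ω) : TendstoZeroInProbability P X := by
  intro ε hε
  refine tendsto_of_tendsto_of_tendsto_of_le_of_le tendsto_const_nhds
    (by simpa using (hL ε hε).add (hU ε hε)) (fun _ => zero_le) fun n => ?_
  refine (measure_mono fun ω (hω : ε < |X n ω|) => ?_).trans (measure_union_le _ _)
  rcases lt_abs.1 hω with hpos | hneg
  · exact Or.inr (lt_abs.2 (.inl (hpos.trans_le (hXU n ω))))
  · exact Or.inl (lt_abs.2 (.inr (hneg.trans_le (neg_le_neg (hLX n ω)))))

end TendstoZeroInProbability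

end ConvergenceInProbability

section QuadraticExpansion

variable {Ω : ℕ → Type*} [∀ n, MeasurableSpace (Ω n)] (P : ∀ n, Measure (Ω n))
  {E : Type*} [NormedAddCommGroup E] [InnerProductSpace ℝ E] [CompleteSpace E]

theorem tendsto_inv_sqrt_natCast_mul (c : ℝ) :
    Tendsto (fun n : ℕ => (Real.sqrt n)⁻¹ * c) atTop (𝓝 0) := by
  simpa using (tendsto_inv_atTop_zero.comp <| Real.tendsto_sqrt_atTop.comp <|
    tendsto_natCast_atTop_atTop).mul_const c

theorem tendstoZeroInProbability_quadratic_remainder (F : ∀ n, E → Ω n → ℝ)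
    (hF : ∀ n ω, ContDiff ℝ 2 (F n · ω)) (θ0 h : E) (Δ : ∀ n, Ω n → E) (J : ℕ → E →L[ℝ] E)
    (hgrad : TendstoZeroInProbability P fun n ω =>
      Real.sqrt n • gradient (F n · ω) θ0 - Δ n ω)
    (hhess : ∀ s : ∀ n, Ω n → E, TendstoZeroInProbability P (fun n ω => s n ω - θ0) →
      TendstoZeroInProbability P fun n ω => fderiv ℝ (gradient (F n · ω)) (s n ω) + J n) :
    TendstoZeroInProbability P fun n ω =>
      (n : ℝ) * (F n (θ0 + (Real.sqrt n)⁻¹ • h) ω - F n θ0 ω) -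
        (⟪h, Δ n ω⟫ - 1 / 2 * ⟪h, J n h⟫) := by
  choose t ht hTaylor using fun n ω =>
    exists_sub_eq_inner_gradient_add_half_inner_hessian (hF n ω) θ0 ((Real.sqrt n)⁻¹ • h)
  set ξ : ∀ n, Ω n → E := fun n ω => θ0 + t n ω • (Real.sqrt n)⁻¹ • h
  have hξ : TendstoZeroInProbability P fun n ω => ξ n ω - θ0 := by
    refine .of_norm_le_tendsto_zero (tendsto_inv_sqrt_natCast_mul ‖h‖) fun n ω => ?_
    have ht1 : |t n ω| ≤ 1 := abs_le.2 ⟨by linarith [(ht n ω).1], (ht n ω).2.le⟩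
    simp only [ξ, add_sub_cancel_left, norm_smul, Real.norm_eq_abs,
      abs_inv, abs_of_nonneg (Real.sqrt_nonneg _)]
    exact mul_le_of_le_one_left (by positivity) ht1
  have hlin := hgrad.of_norm_le_mul
    (Y := fun n ω => ⟪h, Real.sqrt n • gradient (F n · ω) θ0 - Δ n ω⟫)
    ‖h‖ (.of_forall fun n ω => norm_inner_le_norm _ _)
  have hquad := (hhess ξ hξ).of_norm_le_mul
    (Y := fun n ω => 1 / 2 * ⟪h, (fderiv ℝ (gradient (F n · ω)) (ξ n ω) + J n) h⟫)
    (‖h‖ * ‖h‖) (.of_forall fun n ω => norm_half_inner_apply_le h _)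
  refine (hlin.add hquad).of_norm_le_mul 1 ?_
  filter_upwards [eventually_ge_atTop 1] with n hn ω
  have hexp := sq_mul_sub_sub_quadratic_eq (Δ := Δ n ω) (J := J n)
    (Real.sqrt_pos.2 (by exact_mod_cast hn)).ne' (hTaylor n ω)
  rw [Real.sq_sqrt (Nat.cast_nonneg n)] at hexp
  rw [one_mul, hexp]

end QuadraticExpansion

theorem stmt_12_general
    (d : ℕ) (h θ0 : EuclideanSpace ℝ (Fin d))
    (Ω : ℕ → Type*) [∀ n, MeasurableSpace (Ω n)]
    (Pr : (n : ℕ) → Measure (Ω n))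
    (FL FU : (n : ℕ) → EuclideanSpace ℝ (Fin d) → Ω n → ℝ)
    (hFLdiff : ∀ n ω, ContDiff ℝ 2 fun θ => FL n θ ω)
    (hFUdiff : ∀ n ω, ContDiff ℝ 2 fun θ => FU n θ ω)
    (A : (n : ℕ) → Ω n → ℝ)
    -- sandwich inequalities with θ̃ₙ = θ₀ + h/√n
    (hsand : ∀ (n : ℕ) (ω : Ω n),
      (n : ℝ) * (FL n (θ0 + (Real.sqrt n)⁻¹ • h) ω - FL n θ0 ω) ≤ A n ω ∧
      A n ω ≤ (n : ℝ) * (FU n (θ0 + (Real.sqrt n)⁻¹ • h) ω - FU n θ0 ω))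
    (Δ : (n : ℕ) → Ω n → EuclideanSpace ℝ (Fin d))
    (Jn : ℕ → Matrix (Fin d) (Fin d) ℝ)
    -- (i) √n ∇Fₙ(θ₀) − Δₙ → 0 in probability, for both F = Fᴸ and F = Fᵁ
    (hgradL : ∀ ε > (0 : ℝ),
      Tendsto (fun n => Pr n {ω | ε <
          ‖Real.sqrt n • gradient (fun θ => FL n θ ω) θ0 - Δ n ω‖})
        atTop (𝓝 0))
    (hgradU : ∀ ε > (0 : ℝ),
      Tendsto (fun n => Pr n {ω | ε <
          ‖Real.sqrt n • gradient (fun θ => FU n θ ω) θ0 - Δ n ω‖})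
        atTop (𝓝 0))
    -- (ii) ∇²Fₙ(sₙ) + Jₙ → 0 in probability for every random sₙ → θ₀ in probability
    (hhessL : ∀ s : (n : ℕ) → Ω n → EuclideanSpace ℝ (Fin d),
      (∀ ε > (0 : ℝ),
        Tendsto (fun n => Pr n {ω | ε < ‖s n ω - θ0‖}) atTop (𝓝 0)) →
      ∀ ε > (0 : ℝ),
        Tendsto (fun n => Pr n {ω | ε <
            ‖fderiv ℝ (gradient fun θ => FL n θ ω) (s n ω) +
              Matrix.toEuclideanCLM (𝕜 := ℝ) (Jn n)‖})
          atTop (𝓝 0))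
    (hhessU : ∀ s : (n : ℕ) → Ω n → EuclideanSpace ℝ (Fin d),
      (∀ ε > (0 : ℝ),
        Tendsto (fun n => Pr n {ω | ε < ‖s n ω - θ0‖}) atTop (𝓝 0)) →
      ∀ ε > (0 : ℝ),
        Tendsto (fun n => Pr n {ω | ε <
            ‖fderiv ℝ (gradient fun θ => FU n θ ω) (s n ω) +
              Matrix.toEuclideanCLM (𝕜 := ℝ) (Jn n)‖})
          atTop (𝓝 0)) :
    ∀ ε > (0 : ℝ),
      Tendsto (fun n => Pr n {ω | ε <
          |A n ω - (⟪h, Δ n ω⟫ -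
            (1 / 2) * ⟪h, (Matrix.toEuclideanCLM (𝕜 := ℝ) (Jn n)) h⟫)|})
        atTop (𝓝 0) := by

  have hL := tendstoZeroInProbability_quadratic_remainder Pr FL hFLdiff θ0 h Δ
    (fun n => Matrix.toEuclideanCLM (𝕜 := ℝ) (Jn n)) hgradL hhessL
  have hU := tendstoZeroInProbability_quadratic_remainder Pr FU hFUdiff θ0 h Δ
    (fun n => Matrix.toEuclideanCLM (𝕜 := ℝ) (Jn n)) hgradU hhessU
  exact hL.of_le_of_le hU (fun n ω => sub_le_sub_right (hsand n ω).1 _)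
    (fun n ω => sub_le_sub_right (hsand n ω).2 _)

/-- Sandwich argument for a fixed local parameter `h`: random variables
`Aₙ` squeezed between quadratic expansions of smooth random functions `Fₙᴸ, Fₙᵁ` admit the
quadratic approximation `hᵀΔₙ − ½ hᵀJₙh` in probability. -/
theorem stmt_12
    (d : ℕ) (h θ0 : EuclideanSpace ℝ (Fin d))
    (Ω : ℕ → Type*) [∀ n, MeasurableSpace (Ω n)]
    (Pr : (n : ℕ) → Measure (Ω n)) (hPr : ∀ n, IsProbabilityMeasure (Pr n))
    (FL FU : (n : ℕ) → EuclideanSpace ℝ (Fin d) → Ω n → ℝ)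
    (hFLdiff : ∀ n ω, ContDiff ℝ 2 fun θ => FL n θ ω)
    (hFUdiff : ∀ n ω, ContDiff ℝ 2 fun θ => FU n θ ω)
    (A : (n : ℕ) → Ω n → ℝ)
    -- sandwich inequalities with θ̃ₙ = θ₀ + h/√n
    (hsand : ∀ (n : ℕ) (ω : Ω n),
      (n : ℝ) * (FL n (θ0 + (Real.sqrt n)⁻¹ • h) ω - FL n θ0 ω) ≤ A n ω ∧
      A n ω ≤ (n : ℝ) * (FU n (θ0 + (Real.sqrt n)⁻¹ • h) ω - FU n θ0 ω))
    (Δ : (n : ℕ) → Ω n → EuclideanSpace ℝ (Fin d))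
    (Jn : ℕ → Matrix (Fin d) (Fin d) ℝ) (hJnsym : ∀ n, (Jn n).IsSymm)
    -- (i) √n ∇Fₙ(θ₀) − Δₙ → 0 in probability, for both F = Fᴸ and F = Fᵁ
    (hgradL : ∀ ε > (0 : ℝ),
      Tendsto (fun n => Pr n {ω | ε <
          ‖Real.sqrt n • gradient (fun θ => FL n θ ω) θ0 - Δ n ω‖})
        atTop (𝓝 0))
    (hgradU : ∀ ε > (0 : ℝ),
      Tendsto (fun n => Pr n {ω | ε <
          ‖Real.sqrt n • gradient (fun θ => FU n θ ω) θ0 - Δ n ω‖})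
        atTop (𝓝 0))
    -- (ii) ∇²Fₙ(sₙ) + Jₙ → 0 in probability for every random sₙ → θ₀ in probability
    (hhessL : ∀ s : (n : ℕ) → Ω n → EuclideanSpace ℝ (Fin d),
      (∀ ε > (0 : ℝ),
        Tendsto (fun n => Pr n {ω | ε < ‖s n ω - θ0‖}) atTop (𝓝 0)) →
      ∀ ε > (0 : ℝ),
        Tendsto (fun n => Pr n {ω | ε <
            ‖fderiv ℝ (gradient fun θ => FL n θ ω) (s n ω) +
              Matrix.toEuclideanCLM (𝕜 := ℝ) (Jn n)‖})
          atTop (𝓝 0))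
    (hhessU : ∀ s : (n : ℕ) → Ω n → EuclideanSpace ℝ (Fin d),
      (∀ ε > (0 : ℝ),
        Tendsto (fun n => Pr n {ω | ε < ‖s n ω - θ0‖}) atTop (𝓝 0)) →
      ∀ ε > (0 : ℝ),
        Tendsto (fun n => Pr n {ω | ε <
            ‖fderiv ℝ (gradient fun θ => FU n θ ω) (s n ω) +
              Matrix.toEuclideanCLM (𝕜 := ℝ) (Jn n)‖})
          atTop (𝓝 0)) :
    ∀ ε > (0 : ℝ),
      Tendsto (fun n => Pr n {ω | ε <
          |A n ω - (⟪h, Δ n ω⟫ -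
            (1 / 2) * ⟪h, (Matrix.toEuclideanCLM (𝕜 := ℝ) (Jn n)) h⟫)|})
        atTop (𝓝 0) :=
  stmt_12_general d h θ0 Ω Pr FL FU hFLdiff hFUdiff A hsand Δ Jn hgradL hgradU hhessL hhessU
end

section
/- Let θ_0 ∈ ℝ^p. For each n, on a probability space (Ω_n, Pr_n), let M_n : ℝ^p × Ω_n → ℝ be a random criterion function with measurable maximizer θ̂_n (i.e. M_n(θ̂_n(ω), ω) = sup_θ M_n(θ, ω)), let Δ_n : Ω_n → ℝ^p be uniformly tight random vectors, and let J_n be symmetric p×p matrices whose smallest eigenvalue satisfies λ_min(J_n) ≥ c > 0 for all large n and which are bounded. Suppose θ̂_n → θ_0 in Pr_n-probability, and that for every random sequence θ̃_n with θ̃_n → θ_0 in Pr_n-probability, writing h̃_n = θ̃_n − θ_0, one has M_n(θ̃_n) − M_n(θ_0) = √n h̃_nᵀ Δ_n − ½ n h̃_nᵀ J_n h̃_n + R_n(θ̃_n), where R_n(θ̃_n)/(√n‖h̃_n‖ + n‖h̃_n‖² + 1) → 0 in Pr_n-probability. Then √n(θ̂_n − θ_0) − J_n^{-1} Δ_n →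 0 in Pr_n-probability; in particular √n(θ̂_n − θ_0) is uniformly tight. -/
/-!
Write `h = √n (θ̂ₙ - θ₀)` and `g = Jₙ⁻¹ Δₙ`. The expansion turns `Mₙ(θ₀ + h/√n) - Mₙ(θ₀)` into
the quadratic model `⟪h, Δₙ⟫ - ½ ⟪h, Jₙ h⟫` plus an error `o_P(1 + ‖h‖ + ‖h‖²)`. Comparing `θ̂ₙ`
with `θ₀` bounds `‖h‖` by `O(‖Δₙ‖)`, so `h = O_P(1)`. The model is maximized at `g`, with deficit
`½ ⟪h - g, Jₙ (h - g)⟫ ≥ (c/2) ‖h - g‖²`; comparing `θ̂ₙ` with the consistent competitor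
`θ₀ + g/√n` then gives `‖h - g‖² = o_P(1)`. Measurability of `θ̂ₙ` upgrades `O_P(1)` to uniform
tightness.
-/

open MeasureTheory Filter Topology RealInnerProductSpace
open scoped ENNReal

section InProbability

variable {Ω : ℕ → Type*} [∀ n, MeasurableSpace (Ω n)] (Pr : ∀ n, Measure (Ω n))

def TendstoInProbZero (X : ∀ n, Ω n → ℝ) : Prop :=
  ∀ ε > (0 : ℝ), Tendsto (fun n => Pr n {ω | ε < X n ω}) atTop (𝓝 0)

/-- `Xₙ = O_P(1)`: unlike `UniformlyTight`, the bound is only required for large `n`. -/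
def BoundedInProb (X : ∀ n, Ω n → ℝ) : Prop :=
  ∀ η : ℝ≥0∞, 0 < η → ∃ K : ℝ, ∀ᶠ n in atTop, Pr n {ω | K < X n ω} ≤ η

def UniformlyTight (X : ∀ n, Ω n → ℝ) : Prop :=
  ∀ ε > (0 : ℝ), ∃ K : ℝ, ∀ n, Pr n {ω | K < X n ω} < ENNReal.ofReal ε

variable {Pr}

theorem measure_setOf_lt_le_add {α : Type*} [MeasurableSpace α] (μ : Measure α) {X Y Z : α → ℝ}
    {a δ K : ℝ} (h : ∀ ω, Y ω ≤ δ → Z ω ≤ K → X ω ≤ a) :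
    μ {ω | a < X ω} ≤ μ {ω | δ < Y ω} + μ {ω | K < Z ω} := by
  refine (measure_mono fun ω (hω : a < X ω) => ?_).trans (measure_union_le _ _)
  by_contra hω'
  exact hω.not_ge (h ω (not_lt.1 fun hY => hω' (.inl hY)) (not_lt.1 fun hZ => hω' (.inr hZ)))

theorem tendsto_measure_setOf_lt_atTop {α : Type*} [MeasurableSpace α] {μ : Measure α}
    [IsFiniteMeasure μ] {X : α → ℝ} (hX : AEMeasurable X μ) :
    Tendsto (fun r : ℝ => μ {ω | r < X ω}) atTop (𝓝 0) := by
  have hempty : ⋂ r : ℝ, {ω | r < X ω} = ∅ :=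
    Set.iInter_eq_empty_iff.2 fun ω => ⟨X ω, lt_irrefl (X ω)⟩
  simpa [Function.comp_def, hempty] using tendsto_measure_iInter_atTop (μ := μ)
    (fun r => nullMeasurableSet_lt aemeasurable_const hX)
    (fun r s hrs ω (hω : s < X ω) => hrs.trans_lt hω) ⟨0, measure_ne_top μ _⟩

theorem tendstoInProbZero_zero : TendstoInProbZero Pr 0 := by
  intro ε hε
  simp [not_lt.2 hε.le]

theorem TendstoInProbZero.of_forall_le {X Y Z : ∀ n, Ω n → ℝ} (hY : TendstoInProbZero Pr Y)
    (hZ : BoundedInProb Pr Z)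
    (h : ∀ ε > (0 : ℝ), ∀ K, ∃ δ > (0 : ℝ),
      ∀ᶠ n in atTop, ∀ ω, Y n ω ≤ δ → Z n ω ≤ K → X n ω ≤ ε) :
    TendstoInProbZero Pr X := by
  intro ε hε
  refine ENNReal.tendsto_nhds_zero.2 fun η hη => ?_
  obtain ⟨K, hK⟩ := hZ (η / 2) (ENNReal.half_pos hη.ne')
  obtain ⟨δ, hδ, hXYZ⟩ := h ε hε K
  filter_upwards [(hY δ hδ).eventually (eventually_le_nhds (ENNReal.half_pos hη.ne')), hK,
    hXYZ] with n hYn hZn hn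
  calc _ ≤ _ := measure_setOf_lt_le_add (Pr n) hn
    _ ≤ η / 2 + η / 2 := add_le_add hYn hZn
    _ = η := ENNReal.add_halves η

theorem TendstoInProbZero.boundedInProb_of_forall_le {X Y Z : ∀ n, Ω n → ℝ}
    (hY : TendstoInProbZero Pr Y) (hZ : BoundedInProb Pr Z)
    (h : ∀ K, ∃ δ > (0 : ℝ), ∃ K',
      ∀ᶠ n in atTop, ∀ ω, Y n ω ≤ δ → Z n ω ≤ K → X n ω ≤ K') :
    BoundedInProb Pr X := by
  intro η hη
  obtain ⟨K, hK⟩ := hZ (η / 2) (ENNReal.half_pos hη.ne')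
  obtain ⟨δ, hδ, K', hXYZ⟩ := h K
  refine ⟨K', ?_⟩
  filter_upwards [(hY δ hδ).eventually (eventually_le_nhds (ENNReal.half_pos hη.ne')), hK,
    hXYZ] with n hYn hZn hn
  calc _ ≤ _ := measure_setOf_lt_le_add (Pr n) hn
    _ ≤ η / 2 + η / 2 := add_le_add hYn hZn
    _ = η := ENNReal.add_halves η

theorem TendstoInProbZero.max {X Y : ∀ n, Ω n → ℝ} (hX : TendstoInProbZero Pr X)
    (hY : TendstoInProbZero Pr Y) : TendstoInProbZero Pr fun n ω => max (X n ω) (Y n ω) := by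
  intro ε hε
  refine tendsto_of_tendsto_of_tendsto_of_le_of_le tendsto_const_nhds
    (by simpa using (hX ε hε).add (hY ε hε)) (fun _ => zero_le) fun n => ?_
  exact measure_setOf_lt_le_add (Pr n) fun ω => max_le

theorem BoundedInProb.max {X Y : ∀ n, Ω n → ℝ} (hX : BoundedInProb Pr X)
    (hY : BoundedInProb Pr Y) : BoundedInProb Pr fun n ω => max (X n ω) (Y n ω) := by
  intro η hη
  obtain ⟨K, hK⟩ := hX (η / 2) (ENNReal.half_pos hη.ne')
  obtain ⟨K', hK'⟩ := hY (η / 2) (ENNReal.half_pos hη.ne')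
  refine ⟨Max.max K K', ?_⟩
  filter_upwards [hK, hK'] with n hn hn'
  calc _ ≤ _ := measure_setOf_lt_le_add (Pr n) fun ω => max_le_max
    _ ≤ η / 2 + η / 2 := add_le_add hn hn'
    _ = η := ENNReal.add_halves η

theorem UniformlyTight.boundedInProb {X : ∀ n, Ω n → ℝ} (hX : UniformlyTight Pr X) :
    BoundedInProb Pr X := by
  intro η hη
  obtain ⟨r, -, hr, hrη⟩ := ENNReal.lt_iff_exists_real_btwn.1 hη
  obtain ⟨K, hK⟩ := hX r (ENNReal.ofReal_pos.1 hr)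
  exact ⟨K, Eventually.of_forall fun n => (hK n).le.trans hrη.le⟩

/-- Each of the finitely many `n` below the threshold of `O_P(1)` is handled by continuity from
above of the single finite measure `Prₙ`. -/
theorem BoundedInProb.uniformlyTight [∀ n, IsFiniteMeasure (Pr n)] {X : ∀ n, Ω n → ℝ}
    (hX : BoundedInProb Pr X) (hmeas : ∀ n, AEMeasurable (X n) (Pr n)) :
    UniformlyTight Pr X := by
  intro ε hε
  have hε' : (0 : ℝ≥0∞) < ENNReal.ofReal ε := ENNReal.ofReal_pos.2 hε
  obtain ⟨K, hK⟩ := hX (ENNReal.ofReal ε / 2) (ENNReal.half_pos hε'.ne')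
  obtain ⟨N, hN⟩ := eventually_atTop.1 hK
  have hsmall : ∀ᶠ r in atTop, ∀ n ∈ Set.Iio N, Pr n {ω | r < X n ω} < ENNReal.ofReal ε :=
    (eventually_all_finite (Set.finite_Iio N)).2 fun n _ =>
      (tendsto_measure_setOf_lt_atTop (hmeas n)).eventually_lt_const hε'
  obtain ⟨r, hr, hKr⟩ := (hsmall.and (eventually_ge_atTop K)).exists
  refine ⟨r, fun n => ?_⟩
  rcases lt_or_ge n N with hn | hn
  · exact hr n hn
  · calc Pr n {ω | r < X n ω} ≤ Pr n {ω | K < X n ω} :=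
          measure_mono fun ω (hω : r < X n ω) => hKr.trans_lt hω
      _ ≤ ENNReal.ofReal ε / 2 := hN n hn
      _ < ENNReal.ofReal ε := ENNReal.half_lt_self hε'.ne' ENNReal.ofReal_ne_top

theorem BoundedInProb.tendstoInProbZero_inv_sqrt_smul {F : Type*} [NormedAddCommGroup F]
    [NormedSpace ℝ F] {V : ∀ n, Ω n → F} (hV : BoundedInProb Pr fun n ω => ‖V n ω‖) :
    TendstoInProbZero Pr fun n ω => ‖(√n)⁻¹ • V n ω‖ := by
  have hinv : Tendsto (fun n : ℕ => (√n)⁻¹) atTop (𝓝 0) :=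
    tendsto_inv_atTop_zero.comp (Real.tendsto_sqrt_atTop.comp tendsto_natCast_atTop_atTop)
  refine tendstoInProbZero_zero.of_forall_le hV fun ε hε K => ⟨1, one_pos, ?_⟩
  filter_upwards [(hinv.mul_const K).eventually (eventually_le_nhds (by simpa using hε))]
    with n hn ω _ hK
  rw [norm_smul, Real.norm_of_nonneg (inv_nonneg.2 (Real.sqrt_nonneg _))]
  exact (mul_le_mul_of_nonneg_left hK (inv_nonneg.2 (Real.sqrt_nonneg _))).trans hn

end InProbability

section QuadraticExpansion

variable {E : Type*} [NormedAddCommGroup E] [InnerProductSpace ℝ E]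

theorem mul_norm_le_norm_apply_of_coercive {A : E → E} {c : ℝ} {v : E}
    (hA : c * ‖v‖ ^ 2 ≤ ⟪v, A v⟫) : c * ‖v‖ ≤ ‖A v‖ := by
  have hle : c * ‖v‖ ^ 2 ≤ ‖v‖ * ‖A v‖ := hA.trans (real_inner_le_norm _ _)
  rcases (norm_nonneg v).eq_or_lt with hv | hv
  · rw [← hv, mul_zero]
    exact norm_nonneg _
  · nlinarith

noncomputable def localQuadratic (A : E →L[ℝ] E) (Δ h : E) : ℝ := ⟪h, Δ⟫ - 1 / 2 * ⟪h, A h⟫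

/-- `m = Mₙ(θ₀ + x) - Mₙ(θ₀)` minus its quadratic expansion, divided by
`√n‖x‖ + n‖x‖² + 1`. -/
noncomputable def normalizedRemainder (n : ℕ) (A : E →L[ℝ] E) (Δ : E) (m : ℝ) (x : E) : ℝ :=
  (m - (√n * ⟪x, Δ⟫ - 1 / 2 * n * ⟪x, A x⟫)) / (√n * ‖x‖ + n * ‖x‖ ^ 2 + 1)

theorem eq_localQuadratic_add_normalizedRemainder (n : ℕ) (A : E →L[ℝ] E) (Δ x : E) (m : ℝ) :
    m = localQuadratic A Δ (√n • x) +
      normalizedRemainder n A Δ m x * (‖√n • x‖ + ‖√n • x‖ ^ 2 + 1) := by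
  have hsq : √n * √n = (n : ℝ) := Real.mul_self_sqrt n.cast_nonneg
  have hnorm : ‖√n • x‖ = √n * ‖x‖ := by
    rw [norm_smul, Real.norm_of_nonneg (Real.sqrt_nonneg _)]
  have hden : 0 < √n * ‖x‖ + n * ‖x‖ ^ 2 + 1 := by positivity
  rw [localQuadratic, normalizedRemainder, hnorm, mul_pow, Real.sq_sqrt n.cast_nonneg,
    div_mul_cancel₀ _ hden.ne', A.map_smul, real_inner_smul_left, real_inner_smul_left,
    real_inner_smul_right, ← mul_assoc √n, hsq]
  ring

theorem localQuadratic_le {A : E →L[ℝ] E} {c : ℝ} {h : E} (Δ : E)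
    (hA : c * ‖h‖ ^ 2 ≤ ⟪h, A h⟫) : localQuadratic A Δ h ≤ ‖h‖ * ‖Δ‖ - c / 2 * ‖h‖ ^ 2 := by
  have := real_inner_le_norm h Δ
  rw [localQuadratic]
  linarith

theorem localQuadratic_sub_localQuadratic {A : E →L[ℝ] E} (hA : (A : E →ₗ[ℝ] E).IsSymmetric)
    {Δ g : E} (hg : A g = Δ) (h : E) :
    localQuadratic A Δ g - localQuadratic A Δ h = 1 / 2 * ⟪h - g, A (h - g)⟫ := by
  have hgh : ⟪g, A h⟫ = ⟪h, Δ⟫ := by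
    rw [← hg, real_inner_comm]
    exact hA h g
  simp only [localQuadratic, map_sub, inner_sub_left, inner_sub_right, hgh, hg]
  ring

theorem mul_norm_le_of_localQuadratic_nonneg {A : E →L[ℝ] E} {c r : ℝ} {Δ h : E} (hc : 0 < c)
    (hA : c * ‖h‖ ^ 2 ≤ ⟪h, A h⟫) (hr : |r| ≤ c / 4)
    (hh : 0 ≤ localQuadratic A Δ h + r * (‖h‖ + ‖h‖ ^ 2 + 1)) :
    c * ‖h‖ ≤ 4 * ‖Δ‖ + 2 * c := by
  have hQ := localQuadratic_le Δ hA
  have hrD : r * (‖h‖ + ‖h‖ ^ 2 + 1) ≤ c / 4 * (‖h‖ + ‖h‖ ^ 2 + 1) :=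
    mul_le_mul_of_nonneg_right ((le_abs_self r).trans hr) (by positivity)
  nlinarith [norm_nonneg h, norm_nonneg Δ]

theorem mul_norm_sub_sq_le_of_localQuadratic_le {A : E →L[ℝ] E} {c r s : ℝ} {Δ g h : E}
    (hA : ∀ v, c * ‖v‖ ^ 2 ≤ ⟪v, A v⟫) (hAs : (A : E →ₗ[ℝ] E).IsSymmetric) (hg : A g = Δ)
    (hgh : localQuadratic A Δ g + s * (‖g‖ + ‖g‖ ^ 2 + 1) ≤
      localQuadratic A Δ h + r * (‖h‖ + ‖h‖ ^ 2 + 1)) :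
    c * ‖h - g‖ ^ 2 ≤ 2 * (r * (‖h‖ + ‖h‖ ^ 2 + 1) - s * (‖g‖ + ‖g‖ ^ 2 + 1)) := by
  have := localQuadratic_sub_localQuadratic hAs hg h
  linarith [hA (h - g)]

end QuadraticExpansion

section Matrix

variable {𝕜 ι : Type*} [RCLike 𝕜] [Fintype ι] [DecidableEq ι]

theorem Matrix.isUnit_of_mul_norm_le {J : Matrix ι ι 𝕜} {c : ℝ} (hc : 0 < c)
    (hJ : ∀ v, c * ‖v‖ ≤ ‖Matrix.toEuclideanCLM (𝕜 := 𝕜) J v‖) : IsUnit J := by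
  refine Matrix.mulVec_injective_iff_isUnit.1 fun x y hxy => ?_
  have hJxy : Matrix.toEuclideanCLM (𝕜 := 𝕜) J (WithLp.toLp 2 (x - y)) = 0 := by
    simp [hxy]
  have hnorm := hJ (WithLp.toLp 2 (x - y))
  rw [hJxy, norm_zero] at hnorm
  have : ‖WithLp.toLp 2 (x - y)‖ = 0 := by nlinarith [norm_nonneg (WithLp.toLp 2 (x - y))]
  simpa [sub_eq_zero] using this

theorem Matrix.toEuclideanCLM_apply_inv_apply {J : Matrix ι ι 𝕜} (hJ : IsUnit J)
    (v : EuclideanSpace 𝕜 ι) :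
    Matrix.toEuclideanCLM (𝕜 := 𝕜) J (Matrix.toEuclideanCLM (𝕜 := 𝕜) J⁻¹ v) = v := by
  rw [← mul_apply_eq_comp, ← map_mul,
    Matrix.mul_nonsing_inv _ ((Matrix.isUnit_iff_isUnit_det J).1 hJ), map_one,
    one_apply_eq_self]

end Matrix

section MEstimation

variable {E : Type*} [NormedAddCommGroup E] [InnerProductSpace ℝ E]

theorem mul_norm_smul_sub_le_of_le {M : E → ℝ} {A : E →L[ℝ] E} {c : ℝ} {n : ℕ} {θ₀ θ Δ : E}
    (hc : 0 < c) (hA : ∀ v, c * ‖v‖ ^ 2 ≤ ⟪v, A v⟫) (hθ : M θ₀ ≤ M θ)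
    (hr : |normalizedRemainder n A Δ (M θ - M θ₀) (θ - θ₀)| ≤ c / 4) :
    c * ‖√n • (θ - θ₀)‖ ≤ 4 * ‖Δ‖ + 2 * c :=
  mul_norm_le_of_localQuadratic_nonneg hc (hA _) hr <|
    eq_localQuadratic_add_normalizedRemainder n A Δ (θ - θ₀) (M θ - M θ₀) ▸ sub_nonneg.2 hθ

theorem mul_le_mul_add_sq_add_one {r δ a K : ℝ} (hr : |r| ≤ δ) (ha : 0 ≤ a) (haK : a ≤ K) :
    r * (a + a ^ 2 + 1) ≤ δ * (K + K ^ 2 + 1) := by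
  have hδ : 0 ≤ δ := (abs_nonneg r).trans hr
  calc r * (a + a ^ 2 + 1) ≤ δ * (a + a ^ 2 + 1) := by
        gcongr
        exact (le_abs_self r).trans hr
    _ ≤ δ * (K + K ^ 2 + 1) := by gcongr

theorem mul_norm_smul_sub_sub_sq_le {M : E → ℝ} {A : E →L[ℝ] E} {c δ K : ℝ} {n : ℕ}
    {θ₀ θ Δ g : E} (hn : n ≠ 0) (hA : ∀ v, c * ‖v‖ ^ 2 ≤ ⟪v, A v⟫)
    (hAs : (A : E →ₗ[ℝ] E).IsSymmetric) (hg : A g = Δ) (hθ : M (θ₀ + (√n)⁻¹ • g) ≤ M θ)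
    (hr : |normalizedRemainder n A Δ (M θ - M θ₀) (θ - θ₀)| ≤ δ)
    (hs : |normalizedRemainder n A Δ (M (θ₀ + (√n)⁻¹ • g) - M θ₀) (θ₀ + (√n)⁻¹ • g - θ₀)| ≤ δ)
    (hθK : ‖√n • (θ - θ₀)‖ ≤ K) (hgK : ‖g‖ ≤ K) :
    c * ‖√n • (θ - θ₀) - g‖ ^ 2 ≤ 4 * δ * (K + K ^ 2 + 1) := by
  set r := normalizedRemainder n A Δ (M θ - M θ₀) (θ - θ₀)
  set s := normalizedRemainder n A Δ (M (θ₀ + (√n)⁻¹ • g) - M θ₀) (θ₀ + (√n)⁻¹ • g - θ₀)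
  have hsg : √n • (θ₀ + (√n)⁻¹ • g - θ₀) = g := by
    rw [add_sub_cancel_left, smul_inv_smul₀ (by positivity)]
  have hθexp := eq_localQuadratic_add_normalizedRemainder n A Δ (θ - θ₀) (M θ - M θ₀)
  have hgexp := eq_localQuadratic_add_normalizedRemainder n A Δ (θ₀ + (√n)⁻¹ • g - θ₀)
    (M (θ₀ + (√n)⁻¹ • g) - M θ₀)
  rw [hsg] at hgexp
  have hsq := mul_norm_sub_sq_le_of_localQuadratic_le (r := r) (s := s) (h := √n • (θ - θ₀))
    hA hAs hg (by linarith)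
  linarith [mul_le_mul_add_sq_add_one hr (norm_nonneg _) hθK,
    mul_le_mul_add_sq_add_one ((abs_neg s).trans_le hs) (norm_nonneg _) hgK]

end MEstimation

theorem stmt_13_general
    (d : ℕ) (θ0 : EuclideanSpace ℝ (Fin d))
    (Ω : ℕ → Type*) [∀ n, MeasurableSpace (Ω n)]
    (Pr : (n : ℕ) → Measure (Ω n)) (hPr : ∀ n, IsProbabilityMeasure (Pr n))
    (M : (n : ℕ) → EuclideanSpace ℝ (Fin d) → Ω n → ℝ)
    -- θ̂ₙ : a measurable maximizer of θ ↦ Mₙ(θ, ω)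
    (θhat : (n : ℕ) → Ω n → EuclideanSpace ℝ (Fin d))
    (hθhatm : ∀ n, Measurable (θhat n))
    (hmax : ∀ (n : ℕ) (ω : Ω n) (θ : EuclideanSpace ℝ (Fin d)), M n θ ω ≤ M n (θhat n ω) ω)
    -- uniformly tight random vectors Δₙ
    (Δ : (n : ℕ) → Ω n → EuclideanSpace ℝ (Fin d))
    (hΔtight : ∀ ε > (0 : ℝ), ∃ Mb : ℝ, ∀ n,
      Pr n {ω | Mb < ‖Δ n ω‖} < ENNReal.ofReal ε)
    -- symmetric Jₙ, eventually with smallest eigenvalue ≥ c > 0, and bounded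
    (Jn : ℕ → Matrix (Fin d) (Fin d) ℝ) (hJnsym : ∀ n, (Jn n).IsSymm)
    (hJnlb : ∃ c > (0 : ℝ), ∀ᶠ n in atTop, ∀ v : EuclideanSpace ℝ (Fin d),
      c * ‖v‖ ^ 2 ≤ ⟪v, (Matrix.toEuclideanCLM (𝕜 := ℝ) (Jn n)) v⟫)
    -- consistency: θ̂ₙ → θ₀ in probability
    (hcons : ∀ ε > (0 : ℝ),
      Tendsto (fun n => Pr n {ω | ε < ‖θhat n ω - θ0‖}) atTop (𝓝 0))
    -- the random quadratic expansion, valid for every random θ̃ₙ → θ₀ in probability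
    (hexp : ∀ θtil : (n : ℕ) → Ω n → EuclideanSpace ℝ (Fin d),
      (∀ ε > (0 : ℝ),
        Tendsto (fun n => Pr n {ω | ε < ‖θtil n ω - θ0‖}) atTop (𝓝 0)) →
      ∀ ε > (0 : ℝ),
        Tendsto (fun n => Pr n {ω | ε <
            |(M n (θtil n ω) ω - M n θ0 ω -
              (Real.sqrt n * ⟪θtil n ω - θ0, Δ n ω⟫ -
                (1 / 2) * (n : ℝ) *
                  ⟪θtil n ω - θ0,
                    (Matrix.toEuclideanCLM (𝕜 := ℝ) (Jn n)) (θtil n ω - θ0)⟫)) /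
              (Real.sqrt n * ‖θtil n ω - θ0‖ + (n : ℝ) * ‖θtil n ω - θ0‖ ^ 2 + 1)|})
          atTop (𝓝 0)) :
    (∀ ε > (0 : ℝ),
      Tendsto (fun n => Pr n {ω | ε <
          ‖Real.sqrt n • (θhat n ω - θ0) -
            (Matrix.toEuclideanCLM (𝕜 := ℝ) ((Jn n)⁻¹)) (Δ n ω)‖})
        atTop (𝓝 0)) ∧
    (∀ ε > (0 : ℝ), ∃ Mb : ℝ, ∀ n,
      Pr n {ω | Mb < ‖Real.sqrt n • (θhat n ω - θ0)‖} < ENNReal.ofReal ε) := by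
  obtain ⟨c, hc, hJc⟩ := hJnlb
  set g := fun n ω => Matrix.toEuclideanCLM (𝕜 := ℝ) (Jn n)⁻¹ (Δ n ω)
  have hJg : ∀ᶠ n in atTop, ∀ ω, Matrix.toEuclideanCLM (𝕜 := ℝ) (Jn n) (g n ω) = Δ n ω :=
    hJc.mono fun n hn ω => Matrix.toEuclideanCLM_apply_inv_apply
      (Matrix.isUnit_of_mul_norm_le hc fun v => mul_norm_le_norm_apply_of_coercive (hn v)) _
  have hΔ : BoundedInProb Pr fun n ω => ‖Δ n ω‖ := UniformlyTight.boundedInProb hΔtight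
  have hg : BoundedInProb Pr fun n ω => ‖g n ω‖ :=
    tendstoInProbZero_zero.boundedInProb_of_forall_le hΔ fun K => ⟨1, one_pos, K / c,
      (hJc.and hJg).mono fun n hn ω _ hK => by
        rw [le_div_iff₀' hc]
        exact (mul_norm_le_norm_apply_of_coercive (hn.1 _)).trans (hn.2 ω ▸ hK)⟩
  have hθstar : TendstoInProbZero Pr fun n ω => ‖θ0 + (√n)⁻¹ • g n ω - θ0‖ := by
    simpa only [add_sub_cancel_left] using hg.tendstoInProbZero_inv_sqrt_smul
  have hr := hexp θhat hcons
  have hh : BoundedInProb Pr fun n ω => ‖√n • (θhat n ω - θ0)‖ :=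
    TendstoInProbZero.boundedInProb_of_forall_le hr hΔ fun K =>
      ⟨c / 4, by positivity, (4 * K + 2 * c) / c, hJc.mono fun n hn ω hrω hK => by
        rw [le_div_iff₀' hc]
        linarith [mul_norm_smul_sub_le_of_le (M := (M n · ω)) hc hn (hmax n ω θ0) hrω]⟩
  refine ⟨?_, hh.uniformlyTight fun n => ?_⟩
  · refine TendstoInProbZero.of_forall_le (TendstoInProbZero.max hr (hexp _ hθstar)) (hh.max hg)
      fun ε hε K => ?_
    have hK : 0 < K + K ^ 2 + 1 := by nlinarith [sq_nonneg (K + 1 / 2)]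
    set D := K + K ^ 2 + 1
    refine ⟨c * ε ^ 2 / (4 * D), by positivity, ?_⟩
    filter_upwards [hJc, hJg, eventually_ne_atTop 0] with n hJn hJgn hn ω hrω hKω
    have hsq := mul_norm_smul_sub_sub_sq_le (M := (M n · ω)) hn hJn
      (Matrix.isSymmetric_toEuclideanLin_iff.2 (Matrix.isHermitian_iff_isSymm.2 (hJnsym n)))
      (hJgn ω) (hmax n ω _) (max_le_iff.1 hrω).1 (max_le_iff.1 hrω).2 (max_le_iff.1 hKω).1
      (max_le_iff.1 hKω).2
    rw [show 4 * (c * ε ^ 2 / (4 * D)) * D = c * ε ^ 2 by field_simp] at hsq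
    exact (pow_le_pow_iff_left₀ (norm_nonneg _) hε.le two_ne_zero).1
      (le_of_mul_le_mul_left hsq hc)
  · have := hPr n
    exact ((hθhatm n).sub_const θ0).const_smul (√n) |>.norm.aemeasurable

/-- From the random quadratic expansion of the criterion function and
consistency of the maximizer, one obtains `√n(θ̂ₙ − θ₀) − Jₙ⁻¹Δₙ → 0` in probability; in
particular `√n(θ̂ₙ − θ₀)` is uniformly tight. -/
theorem stmt_13
    (d : ℕ) (θ0 : EuclideanSpace ℝ (Fin d))
    (Ω : ℕ → Type*) [∀ n, MeasurableSpace (Ω n)]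
    (Pr : (n : ℕ) → Measure (Ω n)) (hPr : ∀ n, IsProbabilityMeasure (Pr n))
    (M : (n : ℕ) → EuclideanSpace ℝ (Fin d) → Ω n → ℝ)
    -- θ̂ₙ : a measurable maximizer of θ ↦ Mₙ(θ, ω)
    (θhat : (n : ℕ) → Ω n → EuclideanSpace ℝ (Fin d))
    (hθhatm : ∀ n, Measurable (θhat n))
    (hmax : ∀ (n : ℕ) (ω : Ω n) (θ : EuclideanSpace ℝ (Fin d)), M n θ ω ≤ M n (θhat n ω) ω)
    -- uniformly tight random vectors Δₙ
    (Δ : (n : ℕ) → Ω n → EuclideanSpace ℝ (Fin d))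
    (hΔtight : ∀ ε > (0 : ℝ), ∃ Mb : ℝ, ∀ n,
      Pr n {ω | Mb < ‖Δ n ω‖} < ENNReal.ofReal ε)
    -- symmetric Jₙ, eventually with smallest eigenvalue ≥ c > 0, and bounded
    (Jn : ℕ → Matrix (Fin d) (Fin d) ℝ) (hJnsym : ∀ n, (Jn n).IsSymm)
    (hJnlb : ∃ c > (0 : ℝ), ∀ᶠ n in atTop, ∀ v : EuclideanSpace ℝ (Fin d),
      c * ‖v‖ ^ 2 ≤ ⟪v, (Matrix.toEuclideanCLM (𝕜 := ℝ) (Jn n)) v⟫)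
    (hJnbd : ∃ C : ℝ, ∀ n, ‖Matrix.toEuclideanCLM (𝕜 := ℝ) (Jn n)‖ ≤ C)
    -- consistency: θ̂ₙ → θ₀ in probability
    (hcons : ∀ ε > (0 : ℝ),
      Tendsto (fun n => Pr n {ω | ε < ‖θhat n ω - θ0‖}) atTop (𝓝 0))
    -- the random quadratic expansion, valid for every random θ̃ₙ → θ₀ in probability
    (hexp : ∀ θtil : (n : ℕ) → Ω n → EuclideanSpace ℝ (Fin d),
      (∀ ε > (0 : ℝ),
        Tendsto (fun n => Pr n {ω | ε < ‖θtil n ω - θ0‖}) atTop (𝓝 0)) →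
      ∀ ε > (0 : ℝ),
        Tendsto (fun n => Pr n {ω | ε <
            |(M n (θtil n ω) ω - M n θ0 ω -
              (Real.sqrt n * ⟪θtil n ω - θ0, Δ n ω⟫ -
                (1 / 2) * (n : ℝ) *
                  ⟪θtil n ω - θ0,
                    (Matrix.toEuclideanCLM (𝕜 := ℝ) (Jn n)) (θtil n ω - θ0)⟫)) /
              (Real.sqrt n * ‖θtil n ω - θ0‖ + (n : ℝ) * ‖θtil n ω - θ0‖ ^ 2 + 1)|})
          atTop (𝓝 0)) :
    (∀ ε > (0 : ℝ),
      Tendsto (fun n => Pr n {ω | ε <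
          ‖Real.sqrt n • (θhat n ω - θ0) -
            (Matrix.toEuclideanCLM (𝕜 := ℝ) ((Jn n)⁻¹)) (Δ n ω)‖})
        atTop (𝓝 0)) ∧
    (∀ ε > (0 : ℝ), ∃ Mb : ℝ, ∀ n,
      Pr n {ω | Mb < ‖Real.sqrt n • (θhat n ω - θ0)‖} < ENNReal.ofReal ε) :=
  stmt_13_general d θ0 Ω Pr hPr M θhat hθhatm hmax Δ hΔtight Jn hJnsym hJnlb hcons hexp
end
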